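/- The representation of CL_3(fb) with dimension vector (1,2,1) on top and (0,1,0) on bottom — top row K →^{(1,0)ᵀ} K² ←^{(0,1)ᵀ} K, bottom row 0 → K ← 0, middle vertical map (1,1)ᵀ : K → K² — is an indecomposable representation whose dimension vector has an entry exceeding 1. -/

import Mathlib

noncomputable section

/-- A representation of the commutative ladder `CL_3(fb)`, on the quiver
`1 → 2 ← 3` (both rows), with vertical maps upward and commutativity
relations. `B` denotes the bottom row and `T` the top row. -/
structure CL3fbRep (K : Type) [Field K] where
  B1 : Type
  B2 : Type
  B3 : Type
  T1 : Type
  T2 : Type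
  T3 : Type
  [a1 : AddCommGroup B1] [a2 : AddCommGroup B2] [a3 : AddCommGroup B3]
  [a4 : AddCommGroup T1] [a5 : AddCommGroup T2] [a6 : AddCommGroup T3]
  [m1 : Module K B1] [m2 : Module K B2] [m3 : Module K B3]
  [m4 : Module K T1] [m5 : Module K T2] [m6 : Module K T3]
  hb1 : B1 →ₗ[K] B2
  hb3 : B3 →ₗ[K] B2
  ht1 : T1 →ₗ[K] T2
  ht3 : T3 →ₗ[K] T2
  v1 : B1 →ₗ[K] T1
  v2 : B2 →ₗ[K] T2
  v3 : B3 →ₗ[K] T3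
  comm1 : ∀ x, ht1 (v1 x) = v2 (hb1 x)
  comm3 : ∀ x, ht3 (v3 x) = v2 (hb3 x)

attribute [instance] CL3fbRep.a1 CL3fbRep.a2 CL3fbRep.a3
attribute [instance] CL3fbRep.a4 CL3fbRep.a5 CL3fbRep.a6
attribute [instance] CL3fbRep.m1 CL3fbRep.m2 CL3fbRep.m3
attribute [instance] CL3fbRep.m4 CL3fbRep.m5 CL3fbRep.m6

variable {K : Type} [Field K]

/-- All spaces trivial. -/
def CL3fbRep.IsZero (M : CL3fbRep K) : Prop :=
  Subsingleton M.B1 ∧ Subsingleton M.B2 ∧ Subsingleton M.B3 ∧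
  Subsingleton M.T1 ∧ Subsingleton M.T2 ∧ Subsingleton M.T3

/-- Direct sum of representations of `CL_3(fb)`. -/
def CL3fbRep.dsum (M N : CL3fbRep K) : CL3fbRep K where
  B1 := M.B1 × N.B1
  B2 := M.B2 × N.B2
  B3 := M.B3 × N.B3
  T1 := M.T1 × N.T1
  T2 := M.T2 × N.T2
  T3 := M.T3 × N.T3
  hb1 := M.hb1.prodMap N.hb1
  hb3 := M.hb3.prodMap N.hb3
  ht1 := M.ht1.prodMap N.ht1
  ht3 := M.ht3.prodMap N.ht3
  v1 := M.v1.prodMap N.v1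
  v2 := M.v2.prodMap N.v2
  v3 := M.v3.prodMap N.v3
  comm1 x := by simp [LinearMap.prodMap_apply, M.comm1, N.comm1]
  comm3 x := by simp [LinearMap.prodMap_apply, M.comm3, N.comm3]

/-- Isomorphism of representations of `CL_3(fb)`. -/
def CL3fbIso (M N : CL3fbRep K) : Prop :=
  ∃ (e1 : M.B1 ≃ₗ[K] N.B1) (e2 : M.B2 ≃ₗ[K] N.B2) (e3 : M.B3 ≃ₗ[K] N.B3)
    (f1 : M.T1 ≃ₗ[K] N.T1) (f2 : M.T2 ≃ₗ[K] N.T2) (f3 : M.T3 ≃ₗ[K] N.T3),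
    (∀ x, e2 (M.hb1 x) = N.hb1 (e1 x)) ∧
    (∀ x, e2 (M.hb3 x) = N.hb3 (e3 x)) ∧
    (∀ x, f2 (M.ht1 x) = N.ht1 (f1 x)) ∧
    (∀ x, f2 (M.ht3 x) = N.ht3 (f3 x)) ∧
    (∀ x, f1 (M.v1 x) = N.v1 (e1 x)) ∧
    (∀ x, f2 (M.v2 x) = N.v2 (e2 x)) ∧
    (∀ x, f3 (M.v3 x) = N.v3 (e3 x))

/-- Indecomposability. -/
def CL3fbRep.Indec (M : CL3fbRep K) : Prop :=
  ¬ M.IsZero ∧ ∀ N N' : CL3fbRep K, CL3fbIso M (N.dsum N') → N.IsZero ∨ N'.IsZero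

/-- The representation of `CL_3(fb)` with dimension vector `(1,2,1)` on top and
`(0,1,0)` on the bottom: top row `K →^{(1,0)ᵀ} K² ←^{(0,1)ᵀ} K`, bottom row
`0 → K ← 0`, middle vertical map `(1,1)ᵀ : K → K²`. -/
def ex15 (K : Type) [Field K] : CL3fbRep K where
  B1 := PUnit
  B2 := K
  B3 := PUnit
  T1 := K
  T2 := K × K
  T3 := K
  hb1 := 0
  hb3 := 0
  ht1 := LinearMap.inl K K K
  ht3 := LinearMap.inr K K K
  v1 := 0
  v2 := LinearMap.prod LinearMap.id LinearMap.id
  v3 := 0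
  comm1 x := by simp
  comm3 x := by simp

/-!
A splitting `M ≅ N ⊕ N'` transports, vertex by vertex, the projection onto `N` to an idempotent
endomorphism of `M`. At the middle top vertex `K²` this endomorphism must commute with both
coordinate inclusions and with the diagonal, which forces it, and hence the whole endomorphism,
to be a scalar. A scalar idempotent is `0` or `1`, so `N` or `N'` is zero.
-/

namespace LinearEquiv

variable {R V W A B C D : Type*} [Semiring R] [AddCommMonoid V] [AddCommMonoid W]
  [AddCommMonoid A] [AddCommMonoid B] [AddCommMonoid C] [AddCommMonoid D]
  [Module R V] [Module R W] [Module R A] [Module R B] [Module R C] [Module R D]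

def projFst (e : V ≃ₗ[R] A × B) : Module.End R V :=
  e.symm.toLinearMap ∘ₗ LinearMap.inl R A B ∘ₗ LinearMap.fst R A B ∘ₗ e.toLinearMap

theorem projFst_apply (e : V ≃ₗ[R] A × B) (v : V) : e.projFst v = e.symm ((e v).1, 0) := rfl

theorem isIdempotentElem_projFst (e : V ≃ₗ[R] A × B) : IsIdempotentElem e.projFst := by
  ext v
  simp [projFst_apply]

theorem subsingleton_of_projFst_eq_zero (e : V ≃ₗ[R] A × B) (h : e.projFst = 0) :
    Subsingleton A := by
  refine ⟨fun a a' => ?_⟩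
  have hfst : ∀ v, (e v).1 = 0 := fun v => by
    simpa [projFst_apply] using LinearMap.congr_fun h v
  simpa using (hfst (e.symm (a, 0))).trans (hfst (e.symm (a', 0))).symm

theorem subsingleton_of_projFst_eq_one (e : V ≃ₗ[R] A × B) (h : e.projFst = 1) :
    Subsingleton B := by
  refine ⟨fun b b' => ?_⟩
  have hsnd : ∀ v, (e v).2 = 0 := fun v => by
    have := congrArg (fun w => (e w).2) (LinearMap.congr_fun h v)
    simpa [projFst_apply, eq_comm] using this
  simpa using (hsnd (e.symm (0, b))).trans (hsnd (e.symm (0, b'))).symm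

theorem projFst_comp_eq (e : V ≃ₗ[R] A × B) (e' : W ≃ₗ[R] C × D) (g : V →ₗ[R] W)
    (h₁ : A →ₗ[R] C) (h₂ : B →ₗ[R] D) (hg : ∀ v, e' (g v) = h₁.prodMap h₂ (e v)) :
    e'.projFst ∘ₗ g = g ∘ₗ e.projFst := by
  ext v
  rw [LinearMap.comp_apply, LinearMap.comp_apply, projFst_apply, projFst_apply,
    e'.symm_apply_eq, hg, hg, e.apply_symm_apply]
  simp

end LinearEquiv

theorem exists_eq_smul_one_of_comp_inl_inr_diag {R : Type*} [CommSemiring R]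
    {p₁ p₃ q : Module.End R R} {p₂ : Module.End R (R × R)}
    (h₁ : p₂ ∘ₗ LinearMap.inl R R R = LinearMap.inl R R R ∘ₗ p₁)
    (h₃ : p₂ ∘ₗ LinearMap.inr R R R = LinearMap.inr R R R ∘ₗ p₃)
    (hq : p₂ ∘ₗ LinearMap.id.prod LinearMap.id = LinearMap.id.prod LinearMap.id ∘ₗ q) :
    ∃ c : R, p₁ = c • 1 ∧ p₂ = c • 1 ∧ p₃ = c • 1 ∧ q = c • 1 := by
  have hinl : p₂ (1, 0) = (p₁ 1, 0) := LinearMap.congr_fun h₁ 1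
  have hinr : p₂ (0, 1) = (0, p₃ 1) := LinearMap.congr_fun h₃ 1
  have hdiag : p₂ (1, 1) = (q 1, q 1) := LinearMap.congr_fun hq 1
  obtain ⟨hq₁, hq₃⟩ : q 1 = p₁ 1 ∧ q 1 = p₃ 1 := by
    have : p₂ (1, 1) = p₂ (1, 0) + p₂ (0, 1) := by rw [← map_add]; simp
    simpa [hdiag, hinl, hinr] using this
  have hscalar : ∀ p : Module.End R R, p = p 1 • 1 := fun p =>
    LinearMap.ext_ring (by simp)
  have hp₁ : p₁ = q 1 • 1 := by rw [hq₁]; exact hscalar p₁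
  have hp₃ : p₃ = q 1 • 1 := by rw [hq₃]; exact hscalar p₃
  refine ⟨q 1, hp₁, LinearMap.prod_ext ?_ ?_, hp₃, hscalar q⟩
  · rw [h₁, hp₁]; ext <;> simp
  · rw [h₃, hp₃]; ext <;> simp

instance (K : Type) [Field K] : Subsingleton (ex15 K).B1 := inferInstanceAs (Subsingleton PUnit)

instance (K : Type) [Field K] : Subsingleton (ex15 K).B3 := inferInstanceAs (Subsingleton PUnit)

theorem ex15_indec (K : Type) [Field K] : (ex15 K).Indec := by
  constructor
  · rintro ⟨-, -, -, -, h, -⟩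
    exact one_ne_zero (congrArg Prod.fst (h.elim ((1 : K), (0 : K)) (0, 0)))
  rintro N N' ⟨e₁, e₂, e₃, f₁, f₂, f₃, -, -, ht₁, ht₃, -, hv₂, -⟩
  obtain ⟨c, hp₁, hp₂, hp₃, hq⟩ := exists_eq_smul_one_of_comp_inl_inr_diag
    (f₁.projFst_comp_eq f₂ _ _ _ ht₁) (f₃.projFst_comp_eq f₂ _ _ _ ht₃)
    (e₂.projFst_comp_eq f₂ _ _ _ hv₂)
  have hc : IsIdempotentElem (c • 1 : Module.End K K) := hp₁ ▸ f₁.isIdempotentElem_projFst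
  have hcc : c * c = c := by simpa using LinearMap.congr_fun hc.eq 1
  obtain rfl | rfl := IsIdempotentElem.iff_eq_zero_or_one.mp hcc
  · rw [zero_smul] at hp₁ hp₂ hp₃ hq
    exact .inl ⟨e₁.subsingleton_of_projFst_eq_zero (Subsingleton.elim _ _),
      e₂.subsingleton_of_projFst_eq_zero hq,
      e₃.subsingleton_of_projFst_eq_zero (Subsingleton.elim _ _),
      f₁.subsingleton_of_projFst_eq_zero hp₁, f₂.subsingleton_of_projFst_eq_zero hp₂,
      f₃.subsingleton_of_projFst_eq_zero hp₃⟩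
  · rw [one_smul] at hp₁ hp₂ hp₃ hq
    exact .inr ⟨e₁.subsingleton_of_projFst_eq_one (Subsingleton.elim _ _),
      e₂.subsingleton_of_projFst_eq_one hq,
      e₃.subsingleton_of_projFst_eq_one (Subsingleton.elim _ _),
      f₁.subsingleton_of_projFst_eq_one hp₁, f₂.subsingleton_of_projFst_eq_one hp₂,
      f₃.subsingleton_of_projFst_eq_one hp₃⟩

/-- the above representation of `CL_3(fb)` is indecomposable, and
its dimension vector has an entry exceeding `1` (the middle top space has
dimension `2`). -/
theorem stmt15 (K : Type) [Field K] :
    (ex15 K).Indec ∧ 1 < Module.finrank K (ex15 K).T2 := by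
  refine ⟨ex15_indec K, ?_⟩
  show 1 < Module.finrank K (K × K)
  simp
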